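/- The odd simple generators e⁺ = c†∘b and e⁻ = b†∘c of the single-site realization of U_q(A(M−1,N−1)) satisfy the quantum odd Chevalley relation: e⁺e⁻ + e⁻e⁺ equals the diagonal operator |e, m⟩ ↦ [e + m]_q |e, m⟩, i.e. the anticommutator equals (q^h − q^{−h})/(q − q^{−1}) where h is the diagonal operator |e, m⟩ ↦ (e + m)|e, m⟩ (the eigenvalue of n + n'). -/
import Mathlib


/-!
Single-site realization of the odd simple generators of `U_q(A(M−1,N−1))` on the
Fock space `(Bool × ℕ) →₀ ℂ` of one fermionic and one `q`-bosonic mode.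
-/

noncomputable section

/-- The Fock space of one fermionic and one `q`-bosonic mode. -/
abbrev VSpace : Type := (Bool × ℕ) →₀ ℂ

/-- The `q`-integer `[x]_q = (q^x − q^{−x})/(q − q⁻¹)`. -/
def qInt (q : ℂ) (x : ℤ) : ℂ := (q ^ x - q ^ (-x)) / (q - q⁻¹)

/-- The fermionic annihilation operator `c : |true, m⟩ ↦ |false, m⟩`. -/
def cAnn : Module.End ℂ VSpace :=
  Finsupp.lift VSpace ℂ (Bool × ℕ) fun x =>
    if x.1 = true then Finsupp.single (false, x.2) (1 : ℂ) else 0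

/-- The fermionic creation operator `c† : |false, m⟩ ↦ |true, m⟩`. -/
def cCre : Module.End ℂ VSpace :=
  Finsupp.lift VSpace ℂ (Bool × ℕ) fun x =>
    if x.1 = false then Finsupp.single (true, x.2) (1 : ℂ) else 0

/-- The `q`-bosonic annihilation operator `b : |e, m⟩ ↦ s(m)|e, m−1⟩` (zero if `m = 0`). -/
def bAnn (s : ℤ → ℂ) : Module.End ℂ VSpace :=
  Finsupp.lift VSpace ℂ (Bool × ℕ) fun x =>
    if x.2 = 0 then 0 else s (x.2) • Finsupp.single (x.1, x.2 - 1) (1 : ℂ)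

/-- The `q`-bosonic creation operator `b† : |e, m⟩ ↦ s(m+1)|e, m+1⟩`. -/
def bCre (s : ℤ → ℂ) : Module.End ℂ VSpace :=
  Finsupp.lift VSpace ℂ (Bool × ℕ) fun x =>
    s ((x.2 : ℤ) + 1) • Finsupp.single (x.1, x.2 + 1) (1 : ℂ)

/-- The diagonal operator `(q^h − q^{−h})/(q − q⁻¹) : |e, m⟩ ↦ [e + m]_q |e, m⟩`. -/
def qCartanDiag (q : ℂ) : Module.End ℂ VSpace :=
  Finsupp.lift VSpace ℂ (Bool × ℕ) fun x =>
    qInt q ((if x.1 then 1 else 0) + (x.2 : ℤ)) • Finsupp.single x (1 : ℂ)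

lemma lift_single (f : Bool × ℕ → VSpace) (x : Bool × ℕ) (c : ℂ) :
    Finsupp.lift VSpace ℂ (Bool × ℕ) f (Finsupp.single x c) = c • f x := by
  simp

lemma cAnn_single (e : Bool) (m : ℕ) (c : ℂ) :
    cAnn (Finsupp.single (e, m) c) =
      if e then Finsupp.single (false, m) c else 0 := by
  rcases e with _|_ <;> simp [cAnn, lift_single, Finsupp.smul_single]

lemma cCre_single (e : Bool) (m : ℕ) (c : ℂ) :
    cCre (Finsupp.single (e, m) c) =
      if e then 0 else Finsupp.single (true, m) c := by
  rcases e with _|_ <;> simp [cCre, lift_single, Finsupp.smul_single]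

lemma bAnn_single (s : ℤ → ℂ) (e : Bool) (m : ℕ) (c : ℂ) :
    bAnn s (Finsupp.single (e, m) c) =
      if m = 0 then 0 else Finsupp.single (e, m - 1) (c * s m) := by
  rcases m with _|m <;> simp [bAnn, lift_single, Finsupp.smul_single, smul_eq_mul]

lemma bCre_single (s : ℤ → ℂ) (e : Bool) (m : ℕ) (c : ℂ) :
    bCre s (Finsupp.single (e, m) c) =
      Finsupp.single (e, m + 1) (c * s ((m : ℤ) + 1)) := by
  simp [bCre, lift_single, Finsupp.smul_single, smul_eq_mul]

lemma single_mul_single_same (a : Bool × ℕ) (b c : ℂ) :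
    (Finsupp.single a b : VSpace) * Finsupp.single a c = Finsupp.single a (b * c) := by
  ext x
  simp only [Finsupp.mul_apply, Finsupp.single_apply]
  split <;> simp

/-- the odd simple generators `e⁺ = c†∘b`, `e⁻ = b†∘c` satisfy the
quantum odd Chevalley relation `e⁺e⁻ + e⁻e⁺ = (q^h − q^{−h})/(q − q⁻¹)`. -/
theorem odd_chevalley_relation (q : ℂ) (hq0 : q ≠ 0) (hq1 : q ^ 2 ≠ 1)
    (s : ℤ → ℂ) (hs : ∀ n : ℤ, s n ^ 2 = qInt q n) :
    (cCre * bAnn s) * (bCre s * cAnn) + (bCre s * cAnn) * (cCre * bAnn s)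
      = qCartanDiag q := by
  have hmul : ∀ n : ℤ, s n * s n = qInt q n := fun n => by rw [← sq]; exact hs n
  have h0 : qInt q 0 = 0 := by simp [qInt]
  refine Finsupp.lhom_ext' fun x => LinearMap.ext_ring ?_
  obtain ⟨e, m⟩ := x
  have hRHS : qCartanDiag q (Finsupp.single (e, m) 1) =
      Finsupp.single (e, m) (qInt q ((if e then 1 else 0) + (m : ℤ))) := by
    simp only [qCartanDiag, Finsupp.smul_single, smul_eq_mul, mul_one,
      Finsupp.lift_apply, Finsupp.single_mul, Finsupp.single_zero, zero_mul,
      Finsupp.sum_single_index]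
    rw [single_mul_single_same, one_mul]
  simp only [LinearMap.coe_comp, LinearMap.comp_apply, LinearMap.add_apply,
    Module.End.mul_apply, Function.comp_apply, Finsupp.lsingle_apply, hRHS]
  rcases e with _|_ <;> rcases m with _|m <;>
    simp only [cAnn_single, cCre_single, bAnn_single, bCre_single,
      if_true, if_false, Bool.false_eq_true, map_zero, zero_add, add_zero,
      Nat.succ_ne_zero, ite_false, ite_true, Nat.succ_sub_one, one_mul,
      Finsupp.single_zero]
  all_goals (try simp [h0])
  all_goals rw [single_mul_single_same, hmul]
  all_goals (congr 1; ring)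

end
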